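/- In a Gumbel-max coupling of two categorical distributions p and q on {1,...,K} (obtained by sharing the same Gumbel noise vector γ across the argmax of log p(k) + γ_k and of log q(k) + γ_k), the probability that both samples equal i is 1 / (1 + Σ_{j ≠ i} max(p(j)/p(i), q(j)/q(i))). -/

import Mathlib

open MeasureTheory Finset

/-- The standard Gumbel(0) distribution, generated as `-log (-log u)` for `u` uniform on `(0,1)`. -/
noncomputable def gumbel : Measure ℝ :=
  ((volume.restrict (Set.Ioo (0:ℝ) 1)).map fun u => -Real.log (-Real.log u))

lemma measurable_gumbelFun : Measurable fun u : ℝ => -Real.log (-Real.log u) :=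
  (Real.measurable_log.comp Real.measurable_log.neg).neg

lemma gumbel_Iio (a : ℝ) :
    gumbel (Set.Iio a) = ENNReal.ofReal (Real.exp (-Real.exp (-a))) := by
  rw [gumbel, Measure.map_apply measurable_gumbelFun measurableSet_Iio,
    Measure.restrict_apply (measurable_gumbelFun measurableSet_Iio)]
  have hE1 : Real.exp (-Real.exp (-a)) < 1 := by
    rw [Real.exp_lt_one_iff]
    exact neg_neg_iff_pos.mpr (Real.exp_pos _)
  have : (fun u : ℝ => -Real.log (-Real.log u)) ⁻¹' Set.Iio a ∩ Set.Ioo 0 1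
      = Set.Ioo 0 (Real.exp (-Real.exp (-a))) := by
    ext u
    simp only [Set.mem_inter_iff, Set.mem_preimage, Set.mem_Iio, Set.mem_Ioo]
    constructor
    · rintro ⟨h, hu0, hu1⟩
      have hlu : 0 < -Real.log u := by
        simpa using Real.log_neg hu0 hu1
      refine ⟨hu0, ?_⟩
      have h1 : -a < Real.log (-Real.log u) := by linarith
      have h2 : Real.exp (-a) < -Real.log u := (Real.lt_log_iff_exp_lt hlu).mp h1
      have h3 : Real.log u < -Real.exp (-a) := by linarith
      exact (Real.log_lt_iff_lt_exp hu0).mp h3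
    · rintro ⟨hu0, huE⟩
      have hu1 : u < 1 := lt_trans huE hE1
      have hlu : 0 < -Real.log u := by
        simpa using Real.log_neg hu0 hu1
      refine ⟨?_, hu0, hu1⟩
      have h3 : Real.log u < -Real.exp (-a) := (Real.log_lt_iff_lt_exp hu0).mpr huE
      have h2 : Real.exp (-a) < -Real.log u := by linarith
      have h1 : -a < Real.log (-Real.log u) := (Real.lt_log_iff_exp_lt hlu).mpr h2
      linarith
  rw [this, Real.volume_Ioo, sub_zero]

instance : IsFiniteMeasure gumbel := by
  constructor
  rw [gumbel, Measure.map_apply measurable_gumbelFun MeasurableSet.univ, Set.preimage_univ,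
    Measure.restrict_apply MeasurableSet.univ, Set.univ_inter, Real.volume_Ioo]
  simp

lemma lintegral_rpow_Ioo {S : ℝ} (hS : 0 ≤ S) :
    ∫⁻ u in Set.Ioo (0:ℝ) 1, ENNReal.ofReal (u ^ S) = ENNReal.ofReal (1 / (S + 1)) := by
  have hInt : IntegrableOn (fun u : ℝ => u ^ S) (Set.Ioo 0 1) volume := by
    have := (intervalIntegral.intervalIntegrable_rpow (μ := volume) (r := S) (a := 0) (b := 1)
      (Or.inl hS)).1
    exact this.mono_set Set.Ioo_subset_Ioc_self
  rw [← ofReal_integral_eq_lintegral_ofReal hInt]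
  · congr 1
    rw [← integral_Ioc_eq_integral_Ioo, ← intervalIntegral.integral_of_le zero_le_one,
      integral_rpow (Or.inl (by linarith))]
    rw [Real.one_rpow, Real.zero_rpow (by linarith)]
    ring
  · exact (ae_restrict_iff' measurableSet_Ioo).mpr
      (Filter.Eventually.of_forall fun u hu => Real.rpow_nonneg hu.1.le S)

lemma log_max_of_pos {a b : ℝ} (ha : 0 < a) (hb : 0 < b) :
    Real.log (max a b) = max (Real.log a) (Real.log b) := by
  rcases le_total a b with h | h
  · rw [max_eq_right h, max_eq_right ((Real.log_le_log_iff ha hb).mpr h)]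
  · rw [max_eq_left h, max_eq_left ((Real.log_le_log_iff hb ha).mpr h)]

/-- In a Gumbel-max coupling of strictly positive distributions `p` and `q` (sharing the same
Gumbel noise vector `γ` across the argmax of `log p k + γ k` and of `log q k + γ k`), the
probability that both samples equal `i` is
`1 / (1 + ∑_{j ≠ i} max (p j / p i) (q j / q i))`. -/
theorem stmt_1 (K : ℕ) (p q : Fin K → ℝ)
    (hp : ∀ j, 0 < p j) (hq : ∀ j, 0 < q j)
    (hpsum : ∑ j, p j = 1) (hqsum : ∑ j, q j = 1) (i : Fin K) :
    (Measure.pi fun _ : Fin K => gumbel)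
      {γ | (∀ j, j ≠ i → Real.log (p j) + γ j < Real.log (p i) + γ i) ∧
           (∀ j, j ≠ i → Real.log (q j) + γ j < Real.log (q i) + γ i)} =
      ENNReal.ofReal (1 / (1 + ∑ j ∈ univ.erase i, max (p j / p i) (q j / q i))) := by
  obtain ⟨n, rfl⟩ : ∃ n, K = n + 1 := ⟨K - 1, (Nat.succ_pred_eq_of_pos i.pos).symm⟩
  set r : Fin n → ℝ := fun j => max (p (i.succAbove j) / p i) (q (i.succAbove j) / q i)
    with hr_def
  have hr : ∀ j, 0 < r j := fun j => lt_max_of_lt_left (div_pos (hp _) (hp i))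
  set S : ℝ := ∑ j, r j with hS_def
  have hS : 0 ≤ S := Finset.sum_nonneg fun j _ => (hr j).le
  have hsum : ∑ j ∈ univ.erase i, max (p j / p i) (q j / q i) = S := by
    have h1 : ∑ j, max (p j / p i) (q j / q i) = max (p i / p i) (q i / q i) + S :=
      Fin.sum_univ_succAbove (fun j => max (p j / p i) (q j / q i)) i
    have h2 := Finset.add_sum_erase univ (fun j => max (p j / p i) (q j / q i)) (mem_univ i)
    simp only [div_self (hp i).ne', div_self (hq i).ne', max_self] at h1 h2
    linarith
  set c : Fin n → ℝ := fun j => -Real.log (r j) with hc_def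
  have key : ∀ (j : Fin n) (x y : ℝ),
      ((Real.log (p (i.succAbove j)) + y < Real.log (p i) + x) ∧
       (Real.log (q (i.succAbove j)) + y < Real.log (q i) + x)) ↔ y < x + c j := by
    intro j x y
    have hlp := Real.log_div (hp (i.succAbove j)).ne' (hp i).ne'
    have hlq := Real.log_div (hq (i.succAbove j)).ne' (hq i).ne'
    have hmax : Real.log (r j) = max (Real.log (p (i.succAbove j) / p i))
        (Real.log (q (i.succAbove j) / q i)) :=
      log_max_of_pos (div_pos (hp _) (hp i)) (div_pos (hq _) (hq i))
    have hc : c j = -Real.log (r j) := rfl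
    constructor
    · rintro ⟨h1, h2⟩
      have hm : max (Real.log (p (i.succAbove j) / p i)) (Real.log (q (i.succAbove j) / q i))
          < x - y := max_lt_iff.mpr ⟨by rw [hlp]; linarith, by rw [hlq]; linarith⟩
      rw [← hmax] at hm
      rw [hc] at *
      linarith
    · intro h
      have hm : Real.log (r j) < x - y := by rw [hc] at h; linarith
      rw [hmax] at hm
      obtain ⟨h1, h2⟩ := max_lt_iff.mp hm
      rw [hlp] at h1; rw [hlq] at h2
      exact ⟨by linarith, by linarith⟩
  set T : Set (ℝ × (Fin n → ℝ)) := {z | ∀ j, z.2 j < z.1 + c j} with hT_def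
  have hT : MeasurableSet T := by
    have hTi : T = ⋂ j, {z : ℝ × (Fin n → ℝ) | z.2 j < z.1 + c j} := by
      ext z; simp [hT_def, Set.mem_iInter]
    rw [hTi]
    exact MeasurableSet.iInter fun j =>
      measurableSet_lt (by fun_prop) (by fun_prop)
  have hset : {γ : Fin (n+1) → ℝ |
        (∀ j, j ≠ i → Real.log (p j) + γ j < Real.log (p i) + γ i) ∧
        (∀ j, j ≠ i → Real.log (q j) + γ j < Real.log (q i) + γ i)}
      = (MeasurableEquiv.piFinSuccAbove (fun _ : Fin (n+1) => ℝ) i) ⁻¹' T := by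
    ext γ
    have he : (MeasurableEquiv.piFinSuccAbove (fun _ : Fin (n+1) => ℝ) i) γ
        = (γ i, fun j => γ (i.succAbove j)) := rfl
    simp only [Set.mem_setOf_eq, Set.mem_preimage, he, hT_def]
    constructor
    · rintro ⟨h1, h2⟩ j
      exact (key j (γ i) (γ (i.succAbove j))).mp
        ⟨h1 _ (Fin.succAbove_ne i j), h2 _ (Fin.succAbove_ne i j)⟩
    · intro h
      constructor <;> intro j hj
      · obtain ⟨j', rfl⟩ := Fin.exists_succAbove_eq hj
        exact ((key j' (γ i) _).mpr (h j')).1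
      · obtain ⟨j', rfl⟩ := Fin.exists_succAbove_eq hj
        exact ((key j' (γ i) _).mpr (h j')).2
  rw [hset,
    (measurePreserving_piFinSuccAbove (fun _ : Fin (n+1) => gumbel) i).measure_preimage
      hT.nullMeasurableSet,
    Measure.prod_apply hT]
  have hinner : ∀ x : ℝ, (Measure.pi fun _ : Fin n => gumbel) (Prod.mk x ⁻¹' T)
      = ENNReal.ofReal (Real.exp (-(Real.exp (-x) * S))) := by
    intro x
    have hslice : (Prod.mk x ⁻¹' T) = Set.pi Set.univ fun j => Set.Iio (x + c j) := by
      ext y; simp [hT_def, Set.mem_pi]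
    rw [hslice, Measure.pi_pi]
    simp only [gumbel_Iio]
    rw [← ENNReal.ofReal_prod_of_nonneg (fun j _ => (Real.exp_pos _).le)]
    congr 1
    rw [← Real.exp_sum]
    congr 1
    have h1 : ∀ j ∈ univ, -Real.exp (-(x + c j)) = -(Real.exp (-x) * r j) := by
      intro j _
      have : -(x + c j) = -x + Real.log (r j) := by
        simp only [hc_def]; ring
      rw [this, Real.exp_add, Real.exp_log (hr j)]
    rw [Finset.sum_congr rfl h1, hS_def, Finset.mul_sum, ← Finset.sum_neg_distrib]
  simp only [hinner]
  have hmeas : Measurable fun x : ℝ => ENNReal.ofReal (Real.exp (-(Real.exp (-x) * S))) :=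
    ENNReal.measurable_ofReal.comp
      (Real.continuous_exp.comp
        (((Real.continuous_exp.comp continuous_neg).mul continuous_const).neg)).measurable
  rw [gumbel, lintegral_map hmeas measurable_gumbelFun]
  have h_eq : ∀ u : ℝ, u ∈ Set.Ioo (0:ℝ) 1 →
      ENNReal.ofReal (Real.exp (-(Real.exp (-(-Real.log (-Real.log u))) * S)))
        = ENNReal.ofReal (u ^ S) := by
    intro u hu
    have hlu : 0 < -Real.log u := by
      simpa using Real.log_neg hu.1 hu.2
    rw [neg_neg, Real.exp_log hlu, Real.rpow_def_of_pos hu.1]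
    congr 1
    ring
  rw [setLIntegral_congr_fun measurableSet_Ioo h_eq, lintegral_rpow_Ioo hS, hsum,
    add_comm S 1]
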